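/- Let p be an odd prime, r ≥ 1, n = p^r − 1, and suppose 2 generates (Z/p^2 Z)^×. If f is a monic Littlewood polynomial of degree n such that f has no irreducible factor over Q of degree at most p^{r−1} − 1, then f is irreducible over Q. -/

import Mathlib

/-!
Since 2 generates `(ℤ/p²)ˣ`, it generates `(ℤ/pʳ)ˣ` as well, so `Φ_{pʳ}` stays irreducible over
`𝔽₂`. Modulo 2 the polynomial `f` is `1 + X + ⋯ + X^{pʳ-1}`, which `Φ_{pʳ}` divides. In a monic
factorization `f = g h` over `ℤ` the prime `Φ_{pʳ}` divides one factor modulo 2, so the other has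
degree at most `pʳ - 1 - φ(pʳ) = p^{r-1} - 1`. Such a factor has no irreducible factor over `ℚ`
by hypothesis, so it is constant. Gauss's lemma transfers irreducibility from `ℤ` to `ℚ`.
-/

open Polynomial

theorem ZMod.intCast_pow_eq_one_iff (a : ℤ) (m k : ℕ) :
    (a : ZMod m) ^ k = 1 ↔ (m : ℤ) ∣ a ^ k - 1 := by
  rw [← Int.cast_pow, ← Int.cast_one, ZMod.intCast_eq_intCast_iff_dvd_sub, dvd_sub_comm]

theorem ZMod.orderOf_intCast_dvd_of_dvd {m n : ℕ} (h : m ∣ n) (a : ℤ) :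
    orderOf (a : ZMod m) ∣ orderOf (a : ZMod n) := by
  simpa using orderOf_map_dvd (ZMod.castHom h (ZMod m)).toMonoidHom (a : ZMod n)

theorem Nat.totient_prime_sq {p : ℕ} (hp : p.Prime) : Nat.totient (p ^ 2) = p * (p - 1) := by
  simp [Nat.totient_prime_pow hp two_pos]

theorem ZMod.orderOf_intCast_prime_of_orderOf_sq {p : ℕ} [hp : Fact p.Prime] {a : ℤ}
    (ha : orderOf (a : ZMod (p ^ 2)) = Nat.totient (p ^ 2)) : orderOf (a : ZMod p) = p - 1 := by
  set t := orderOf (a : ZMod p)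
  have hφ := Nat.totient_prime_sq hp.out
  have hφ0 : p * (p - 1) ≠ 0 := (Nat.mul_pos hp.out.pos (Nat.sub_pos_of_lt hp.out.one_lt)).ne'
  have ht : t ∣ p * (p - 1) := hφ ▸ ha ▸ orderOf_intCast_dvd_of_dvd (dvd_pow_self p two_ne_zero) a
  have ha0 : (a : ZMod p) ≠ 0 := by
    intro h0
    exact hφ0 (zero_dvd_iff.mp (by simpa [t, h0] using ht))
  refine Nat.dvd_antisymm (ZMod.orderOf_dvd_card_sub_one ha0) ?_
  have hsq : ((p : ℤ) ^ 2) ∣ (a ^ t) ^ p - 1 := by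
    have h1 : (p : ℤ) ∣ a ^ t - 1 := (intCast_pow_eq_one_iff a p t).mp (pow_orderOf_eq_one _)
    simpa using dvd_sub_pow_of_dvd_sub h1 1
  have htp : p * (p - 1) ∣ p * t := by
    rw [← hφ, ← ha, mul_comm]
    exact orderOf_dvd_of_pow_eq_one ((intCast_pow_eq_one_iff a _ _).mpr (by
      rw [pow_mul]; exact_mod_cast hsq))
  exact Nat.dvd_of_mul_dvd_mul_left hp.out.pos htp

theorem ZMod.orderOf_intCast_prime_pow_of_orderOf_sq {p : ℕ} [hp : Fact p.Prime] (hp2 : p ≠ 2)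
    {a : ℤ} (ha : orderOf (a : ZMod (p ^ 2)) = Nat.totient (p ^ 2)) {r : ℕ} (hr : r ≠ 0) :
    orderOf (a : ZMod (p ^ r)) = Nat.totient (p ^ r) := by
  have hp1 : p - 1 ≠ 0 := (Nat.sub_pos_of_lt hp.out.one_lt).ne'
  have hdvd : p - 1 ∣ orderOf (a : ZMod (p ^ r)) :=
    orderOf_intCast_prime_of_orderOf_sq ha ▸ orderOf_intCast_dvd_of_dvd (dvd_pow_self p hr) a
  obtain ⟨u, hau⟩ : (p : ℤ) ∣ a ^ (p - 1) - 1 :=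
    (intCast_pow_eq_one_iff a p _).mp (orderOf_intCast_prime_of_orderOf_sq ha ▸ pow_orderOf_eq_one _)
  -- `p ∣ u` would give `a ^ (p - 1) ≡ 1 (mod p ^ 2)`, against the order `p (p - 1)` of `a`
  have hu : ¬ (p : ℤ) ∣ u := by
    rintro ⟨v, rfl⟩
    have h := orderOf_dvd_of_pow_eq_one ((intCast_pow_eq_one_iff a (p ^ 2) (p - 1)).mpr
      ⟨v, by rw [hau]; push_cast; ring⟩)
    rw [ha, Nat.totient_prime_sq hp.out] at h
    have := Nat.le_of_dvd (Nat.pos_of_ne_zero hp1) h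
    have := Nat.mul_le_mul_right (p - 1) hp.out.two_le
    omega
  have hord : orderOf ((a : ZMod (p ^ r)) ^ (p - 1)) = p ^ (r - 1) := by
    have h := orderOf_one_add_mul_prime hp.out hp2 u hu (r - 1)
    rw [Nat.sub_add_cancel (Nat.pos_of_ne_zero hr)] at h
    rw [← h, ← Int.cast_pow, sub_eq_iff_eq_add'.mp hau]
    push_cast; rfl
  rw [orderOf_pow_of_dvd hp1 hdvd, Nat.div_eq_iff_eq_mul_left (Nat.pos_of_ne_zero hp1) hdvd] at hord
  rw [hord, Nat.totient_prime_pow hp.out (Nat.pos_of_ne_zero hr)]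

theorem ZMod.irreducible_cyclotomic_of_orderOf_eq_totient {p n : ℕ} [Fact p.Prime]
    (hpn : ¬ p ∣ n) (h : orderOf (p : ZMod n) = Nat.totient n) :
    Irreducible (cyclotomic n (ZMod p)) :=
  ZMod.irreducible_of_dvd_cyclotomic_of_natDegree hpn dvd_rfl (by
    rw [natDegree_cyclotomic, ← h, ← orderOf_units, ZMod.coe_unitOfCoprime])

theorem map_eq_geom_sum_of_coeff_eq_one_or_neg_one {f : ℤ[X]} {n : ℕ} (hdeg : f.natDegree = n)
    (hcoeff : ∀ i ≤ n, f.coeff i = 1 ∨ f.coeff i = -1) :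
    f.map (Int.castRingHom (ZMod 2)) = ∑ i ∈ Finset.range (n + 1), X ^ i := by
  ext j
  simp only [coeff_map, finsetSum_coeff, coeff_X_pow, Finset.sum_ite_eq, Finset.mem_range,
    Nat.lt_succ_iff]
  split_ifs with hj
  · rcases hcoeff j hj with h | h <;> simp [h]
  · simp [coeff_eq_zero_of_natDegree_lt (hdeg ▸ not_le.mp hj : f.natDegree < j)]

theorem Polynomial.Monic.irreducible_of_prime_dvd_map {R k : Type*} [CommRing R] [IsDomain R]
    [CommRing k] [IsDomain k] (φ : R →+* k) {f : R[X]} (hf : f.Monic) (hf1 : f ≠ 1) {P : k[X]} (hP : Prime P)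
    (hPf : P ∣ f.map φ)
    (hfactor : ∀ g : R[X], g.Monic → g ∣ f → g.natDegree ≠ 0 →
      f.natDegree - P.natDegree < g.natDegree) :
    Irreducible f := by
  have key : ∀ g h : R[X], g.Monic → h.Monic → g * h = f → h.natDegree ≠ 0 → ¬ P ∣ g.map φ := by
    intro g h hg hh hgh hh0 hPg
    have hPle : P.natDegree ≤ g.natDegree :=
      hg.natDegree_map φ ▸ natDegree_le_of_dvd hPg (hg.map φ).ne_zero
    have := hfactor h hh (Dvd.intro_left g hgh) hh0
    rw [← hgh, hg.natDegree_mul hh] at this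
    omega
  refine hf.irreducible_iff_natDegree.mpr ⟨hf1, fun g h hg hh hgh => ?_⟩
  by_contra! ⟨hg0, hh0⟩
  rw [← hgh, Polynomial.map_mul] at hPf
  rcases hP.dvd_or_dvd hPf with hPg | hPh
  · exact key g h hg hh hgh hh0 hPg
  · exact key h g hh hg (mul_comm h g ▸ hgh) hg0 hPh

theorem Polynomial.Monic.irreducible_map_fraction_map_of_prime_dvd_map {R K k : Type*}
    [CommRing R] [IsDomain R] [IsIntegrallyClosed R] [Field K] [Algebra R K] [IsFractionRing R K]
    [CommRing k] [IsDomain k] (φ : R →+* k) {f : R[X]} (hf : f.Monic) (hf0 : f.natDegree ≠ 0)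
    {P : k[X]} (hP : Prime P) (hPf : P ∣ f.map φ)
    (hfactor : ∀ q : K[X], Irreducible q → q ∣ f.map (algebraMap R K) →
      f.natDegree - P.natDegree < q.natDegree) :
    Irreducible (f.map (algebraMap R K)) := by
  refine hf.irreducible_iff_irreducible_map_fraction_map.mp
    (hf.irreducible_of_prime_dvd_map φ (fun h1 => hf0 (h1 ▸ natDegree_one)) hP hPf ?_)
  intro g hg hgf hg0
  have hgK : (g.map (algebraMap R K)).natDegree = g.natDegree := hg.natDegree_map _
  obtain ⟨q, hq, hqg⟩ := WfDvdMonoid.exists_irreducible_factor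
    (not_isUnit_of_natDegree_pos _ (hgK ▸ Nat.pos_of_ne_zero hg0)) (hg.map _).ne_zero
  calc f.natDegree - P.natDegree < q.natDegree := hfactor q hq (hqg.trans (map_dvd _ hgf))
    _ ≤ g.natDegree := hgK ▸ natDegree_le_of_dvd hqg (hg.map _).ne_zero

/-- Let `p` be an odd prime with 2 generating `(ZMod (p^2))ˣ`, `r ≥ 1`, `n = p^r - 1`.
If a monic Littlewood polynomial `f` of degree `n` has no irreducible factor over `ℚ`
of degree at most `p^(r-1) - 1`, then `f` is irreducible over `ℚ`. -/
theorem stmt15 (p r n : ℕ) (hp : p.Prime) (hodd : Odd p) (hr : 1 ≤ r)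
    (hn : n = p ^ r - 1)
    (h2 : orderOf (2 : ZMod (p ^ 2)) = Nat.totient (p ^ 2))
    (f : ℤ[X]) (hf : f.Monic) (hdeg : f.natDegree = n)
    (hcoeff : ∀ i ≤ n, f.coeff i = 1 ∨ f.coeff i = -1)
    (hnofactor : ∀ q : ℚ[X], Irreducible q → q ∣ f.map (Int.castRingHom ℚ) →
      ¬ q.natDegree ≤ p ^ (r - 1) - 1) :
    Irreducible (f.map (Int.castRingHom ℚ)) := by
  have := Fact.mk hp
  obtain ⟨s, rfl⟩ : ∃ s, r = s + 1 := ⟨r - 1, by omega⟩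
  have hp2 : p ≠ 2 := by rintro rfl; exact (by decide : ¬ Odd 2) hodd
  have hpr : 0 < p ^ (s + 1) := pow_pos hp.pos _
  have hps : 0 < p ^ s := pow_pos hp.pos s
  have hps2 := Nat.mul_le_mul_left (p ^ s) hp.two_le
  have hΦdeg : (cyclotomic (p ^ (s + 1)) (ZMod 2)).natDegree = p ^ s * p - p ^ s := by
    rw [natDegree_cyclotomic, Nat.totient_prime_pow_succ hp, Nat.mul_sub_one]
  have hΦirr : Irreducible (cyclotomic (p ^ (s + 1)) (ZMod 2)) := by
    refine ZMod.irreducible_cyclotomic_of_orderOf_eq_totient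
      (by simpa [← even_iff_two_dvd] using hodd.pow) ?_
    exact_mod_cast ZMod.orderOf_intCast_prime_pow_of_orderOf_sq hp2 (a := 2)
      (by exact_mod_cast h2) s.succ_ne_zero
  have hΦdvd : cyclotomic (p ^ (s + 1)) (ZMod 2) ∣ f.map (Int.castRingHom (ZMod 2)) := by
    rw [map_eq_geom_sum_of_coeff_eq_one_or_neg_one hdeg hcoeff, hn, Nat.sub_add_cancel hpr,
      ← prod_cyclotomic_eq_geom_sum hpr]
    exact Finset.dvd_prod_of_mem _ (Finset.mem_erase.mpr
      ⟨(Nat.one_lt_pow s.succ_ne_zero hp.one_lt).ne', Nat.mem_divisors_self _ hpr.ne'⟩)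
  refine hf.irreducible_map_fraction_map_of_prime_dvd_map (Int.castRingHom (ZMod 2)) ?_
    hΦirr.prime hΦdvd fun q hq hqf => ?_
  · rw [hdeg, hn, pow_succ]
    omega
  · have := hnofactor q hq hqf
    rw [Nat.add_sub_cancel] at this
    rw [hdeg, hn, hΦdeg, pow_succ]
    omega
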